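/- Fix ρ ∈ (0,1) and a target distribution Z* on ℝ^d with finite second moment. Define the sequence Z⁽ⁿ⁺¹⁾ = ρZ⁽ⁿ⁾ + (1−ρ)Z* starting from any Z⁽⁰⁾ with finite second moment. Then W₂(Z⁽ⁿ⁾, Z*) ≤ ρ^{n/2} · W₂(Z⁽⁰⁾, Z*), and in particular W₂(Z⁽ⁿ⁾, Z*) → 0 as n → ∞. -/

import Mathlib

open MeasureTheory ENNReal

/-!
Mixing an arbitrary coupling `π` of `(μ, Z*)` with the diagonal coupling of `Z*` in proportions
`ρ : 1 - ρ` couples `ρ μ + (1 - ρ) Z*` with `Z*` at cost `ρ · cost π`, since the diagonal costs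
nothing. Hence each step multiplies `W₂²` by at most `ρ`, so `W₂(Z⁽ⁿ⁾, Z*) ≤ ρ^{n/2} W₂(Z⁽⁰⁾, Z*)`,
and the right-hand side tends to zero because the independent coupling shows `W₂(Z⁽⁰⁾, Z*) < ∞`.
-/
abbrev Euc (d : ℕ) := EuclideanSpace ℝ (Fin d)

/-- A coupling of `μ` and `ν`: a probability measure on the product with the given marginals. -/
def IsCoupling {d : ℕ} (π : Measure (Euc d × Euc d)) (μ ν : Measure (Euc d)) : Prop :=
  IsProbabilityMeasure π ∧ π.map Prod.fst = μ ∧ π.map Prod.snd = ν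

/-- Quadratic transport cost of a coupling. -/
noncomputable def transportCost {d : ℕ} (π : Measure (Euc d × Euc d)) : ℝ≥0∞ :=
  ∫⁻ p, ENNReal.ofReal (‖p.1 - p.2‖ ^ 2) ∂π

/-- Squared 2-Wasserstein distance: infimum of the quadratic transport cost over couplings. -/
noncomputable def W2sq {d : ℕ} (μ ν : Measure (Euc d)) : ℝ≥0∞ :=
  ⨅ (π : Measure (Euc d × Euc d)) (_ : IsCoupling π μ ν), transportCost π

/-- 2-Wasserstein distance. -/
noncomputable def W2 {d : ℕ} (μ ν : Measure (Euc d)) : ℝ≥0∞ :=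
  (W2sq μ ν) ^ (1 / 2 : ℝ)

/-- Finite second moment. -/
def FiniteSecondMoment {d : ℕ} (μ : Measure (Euc d)) : Prop :=
  ∫⁻ x, ENNReal.ofReal (‖x‖ ^ 2) ∂μ < ∞

variable {d : ℕ}

lemma W2sq_le_transportCost {π : Measure (Euc d × Euc d)} {μ ν : Measure (Euc d)}
    (h : IsCoupling π μ ν) : W2sq μ ν ≤ transportCost π :=
  iInf₂_le π h

lemma transportCost_add_smul (a b : ℝ≥0∞) (π π' : Measure (Euc d × Euc d)) :
    transportCost (a • π + b • π') = a * transportCost π + b * transportCost π' := by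
  simp only [transportCost, lintegral_add_measure, lintegral_smul_measure, smul_eq_mul]

lemma IsCoupling.add_smul {a b : ℝ≥0∞} (hab : a + b = 1) {π π' : Measure (Euc d × Euc d)}
    {μ ν μ' ν' : Measure (Euc d)} (hπ : IsCoupling π μ ν) (hπ' : IsCoupling π' μ' ν') :
    IsCoupling (a • π + b • π') (a • μ + b • μ') (a • ν + b • ν') := by
  obtain ⟨hπP, rfl, rfl⟩ := hπ
  obtain ⟨hπ'P, rfl, rfl⟩ := hπ'
  refine ⟨⟨by simp [hab]⟩, ?_, ?_⟩
  · rw [Measure.map_add _ _ measurable_fst, Measure.map_smul, Measure.map_smul]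
  · rw [Measure.map_add _ _ measurable_snd, Measure.map_smul, Measure.map_smul]

lemma isCoupling_map_diag (ν : Measure (Euc d)) [IsProbabilityMeasure ν] :
    IsCoupling (ν.map fun x => (x, x)) ν ν := by
  have hdiag : Measurable fun x : Euc d => (x, x) := by fun_prop
  refine ⟨Measure.isProbabilityMeasure_map hdiag.aemeasurable, ?_, ?_⟩ <;>
    rw [Measure.map_map (by fun_prop) hdiag] <;> simp [Function.comp_def]

lemma W2sq_self (ν : Measure (Euc d)) [IsProbabilityMeasure ν] : W2sq ν ν = 0 := by
  refine nonpos_iff_eq_zero.1 ((W2sq_le_transportCost (isCoupling_map_diag ν)).trans_eq ?_)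
  rw [transportCost, lintegral_map (by fun_prop) (by fun_prop)]
  simp

lemma W2sq_add_smul_le {a b : ℝ≥0∞} (hab : a + b = 1) (μ ν μ' ν' : Measure (Euc d)) :
    W2sq (a • μ + b • μ') (a • ν + b • ν') ≤ a * W2sq μ ν + b * W2sq μ' ν' := by
  rcases eq_or_ne a 0 with rfl | ha
  · simp_all
  rcases eq_or_ne b 0 with rfl | hb
  · simp_all
  have ha' : a ≠ ∞ := ne_top_of_le_ne_top one_ne_top (hab ▸ le_self_add)
  have hb' : b ≠ ∞ := ne_top_of_le_ne_top one_ne_top (hab ▸ le_add_self)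
  simp only [W2sq.eq_1 μ, W2sq.eq_1 μ', ENNReal.mul_iInf_of_ne ha ha',
    ENNReal.mul_iInf_of_ne hb hb', ENNReal.iInf_add, ENNReal.add_iInf, le_iInf_iff]
  intro π' hπ' π hπ
  rw [← transportCost_add_smul]
  exact W2sq_le_transportCost (hπ.add_smul hab hπ')

lemma W2sq_mixture_le {a b : ℝ≥0∞} (hab : a + b = 1) (μ ν : Measure (Euc d))
    [IsProbabilityMeasure ν] : W2sq (a • μ + b • ν) ν ≤ a * W2sq μ ν := by
  calc W2sq (a • μ + b • ν) ν = W2sq (a • μ + b • ν) (a • ν + b • ν) := by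
        rw [← _root_.add_smul, hab, one_smul]
    _ ≤ a * W2sq μ ν + b * W2sq ν ν := W2sq_add_smul_le hab μ ν ν ν
    _ = a * W2sq μ ν := by rw [W2sq_self, mul_zero, add_zero]

lemma ofReal_norm_sub_sq_le {E : Type*} [SeminormedAddCommGroup E] (x y : E) :
    ENNReal.ofReal (‖x - y‖ ^ 2) ≤ 2 * ENNReal.ofReal (‖x‖ ^ 2) + 2 * ENNReal.ofReal (‖y‖ ^ 2) := by
  calc ENNReal.ofReal (‖x - y‖ ^ 2) ≤ ENNReal.ofReal (2 * ‖x‖ ^ 2 + 2 * ‖y‖ ^ 2) := by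
        gcongr
        calc ‖x - y‖ ^ 2 ≤ (‖x‖ + ‖y‖) ^ 2 := by gcongr; exact norm_sub_le x y
          _ ≤ 2 * ‖x‖ ^ 2 + 2 * ‖y‖ ^ 2 := by linarith [add_sq_le (a := ‖x‖) (b := ‖y‖)]
    _ = 2 * ENNReal.ofReal (‖x‖ ^ 2) + 2 * ENNReal.ofReal (‖y‖ ^ 2) := by
        rw [ENNReal.ofReal_add (by positivity) (by positivity),
          ENNReal.ofReal_mul zero_le_two, ENNReal.ofReal_mul zero_le_two, ENNReal.ofReal_ofNat]

lemma isCoupling_prod (μ ν : Measure (Euc d)) [IsProbabilityMeasure μ] [IsProbabilityMeasure ν] :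
    IsCoupling (μ.prod ν) μ ν :=
  ⟨inferInstance, Measure.fst_prod, Measure.snd_prod⟩

lemma W2_ne_top (μ ν : Measure (Euc d)) [IsProbabilityMeasure μ] [IsProbabilityMeasure ν]
    (hμ : FiniteSecondMoment μ) (hν : FiniteSecondMoment ν) : W2 μ ν ≠ ∞ := by
  refine rpow_ne_top_of_nonneg (by norm_num) (ne_top_of_le_ne_top ?_
    (W2sq_le_transportCost (isCoupling_prod μ ν)))
  refine ne_top_of_le_ne_top ?_ (lintegral_mono fun p => ofReal_norm_sub_sq_le p.1 p.2)
  rw [lintegral_add_left (by fun_prop), lintegral_const_mul _ (by fun_prop),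
    lintegral_const_mul _ (by fun_prop), lintegral_prod _ (by fun_prop),
    lintegral_prod _ (by fun_prop)]
  simp only [lintegral_const, measure_univ, mul_one]
  exact add_ne_top.2 ⟨mul_ne_top ofNat_ne_top hμ.ne, mul_ne_top ofNat_ne_top hν.ne⟩

lemma W2_le_of_W2sq_le {μ ν μ' ν' : Measure (Euc d)} {c : ℝ≥0∞}
    (h : W2sq μ ν ≤ c ^ 2 * W2sq μ' ν') : W2 μ ν ≤ c * W2 μ' ν' := by
  calc W2 μ ν ≤ (c ^ 2 * W2sq μ' ν') ^ (1 / 2 : ℝ) := rpow_le_rpow h (by norm_num)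
    _ = c * W2 μ' ν' := by
      rw [W2, ENNReal.mul_rpow_of_nonneg _ _ (by norm_num), ← rpow_natCast, ← rpow_mul]
      norm_num

/-- Iterating the mixture update `Z⁽ⁿ⁺¹⁾ = ρZ⁽ⁿ⁾ + (1-ρ)Z*` contracts the 2-Wasserstein
distance to `Z*` geometrically, and the distance tends to zero. -/
theorem iterated_mixture_convergence {d : ℕ} (ρ : ℝ) (hρ : ρ ∈ Set.Ioo (0 : ℝ) 1)
    (Zstar : Measure (Euc d)) [IsProbabilityMeasure Zstar] (hZs : FiniteSecondMoment Zstar)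
    (Z : ℕ → Measure (Euc d)) (hprob : ∀ n, IsProbabilityMeasure (Z n))
    (h0 : FiniteSecondMoment (Z 0))
    (hrec : ∀ n, Z (n + 1) = ENNReal.ofReal ρ • Z n + ENNReal.ofReal (1 - ρ) • Zstar) :
    (∀ n : ℕ, W2 (Z n) Zstar ≤ ENNReal.ofReal (ρ ^ ((n : ℝ) / 2)) * W2 (Z 0) Zstar) ∧
      Filter.Tendsto (fun n => W2 (Z n) Zstar) Filter.atTop (nhds 0) := by
  obtain ⟨hρ0, hρ1⟩ := hρ
  set r := ENNReal.ofReal √ρ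
  have hr : r ^ 2 = ENNReal.ofReal ρ := by rw [← ofReal_pow (by positivity), Real.sq_sqrt hρ0.le]
  have hrate (n : ℕ) : ENNReal.ofReal (ρ ^ ((n : ℝ) / 2)) = r ^ n := by
    rw [Real.rpow_div_two_eq_sqrt _ hρ0.le, Real.rpow_natCast, ofReal_pow (by positivity)]
  have hweights : ENNReal.ofReal ρ + ENNReal.ofReal (1 - ρ) = 1 := by
    rw [← ofReal_add hρ0.le (by linarith)]; norm_num
  have hsq (n : ℕ) : W2sq (Z n) Zstar ≤ (r ^ n) ^ 2 * W2sq (Z 0) Zstar := by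
    induction n with
    | zero => simp
    | succ n ih =>
      calc W2sq (Z (n + 1)) Zstar ≤ ENNReal.ofReal ρ * W2sq (Z n) Zstar :=
            hrec n ▸ W2sq_mixture_le hweights _ _
        _ ≤ r ^ 2 * ((r ^ n) ^ 2 * W2sq (Z 0) Zstar) := hr ▸ mul_le_mul_right ih _
        _ = (r ^ (n + 1)) ^ 2 * W2sq (Z 0) Zstar := by ring
  have hW (n : ℕ) := hrate n ▸ W2_le_of_W2sq_le (hsq n)
  refine ⟨hW, tendsto_of_tendsto_of_tendsto_of_le_of_le tendsto_const_nhds ?_ (fun _ => zero_le) hW⟩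
  have hr1 : r < 1 := ofReal_lt_one.2 (Real.sqrt_one ▸ Real.sqrt_lt_sqrt hρ0.le hρ1)
  simpa [hrate] using ENNReal.Tendsto.mul_const (tendsto_pow_atTop_nhds_zero_of_lt_one hr1)
    (Or.inr (W2_ne_top (Z 0) Zstar h0 hZs))
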